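/- Let R be a semihyperring and let I be a proper hyperideal of R. Then the following are equivalent: (1) I is strongly irreducible; (2) for all a, b ∈ R: ⟨a⟩ ∩ ⟨b⟩ ⊆ I implies a ∈ I or b ∈ I; (3) the complement R \ I is an i-system, i.e., for all a, b ∈ R \ I, ⟨a⟩ ∩ ⟨b⟩ ∩ (R \ I) ≠ ∅. -/
import Mathlib


/-- A semihyperring `(R, +, ·, 0)`: `+` is a hyperoperation (into nonempty sets),
`·` is an associative single-valued multiplication distributing over `+`,
and `0` is an additive identity and multiplicative absorbing element. -/
class Semihyperring (R : Type*) extends Mul R, Zero R where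
  /-- hyperaddition -/
  hadd : R → R → Set R
  hadd_nonempty : ∀ a b : R, (hadd a b).Nonempty
  hadd_comm : ∀ a b : R, hadd a b = hadd b a
  hadd_assoc : ∀ a b c : R, (⋃ x ∈ hadd a b, hadd x c) = ⋃ x ∈ hadd b c, hadd a x
  hadd_zero : ∀ a : R, hadd a 0 = {a}
  mul_assoc' : ∀ a b c : R, a * b * c = a * (b * c)
  left_distrib' : ∀ a b c : R, (fun x => a * x) '' hadd b c = hadd (a * b) (a * c)
  right_distrib' : ∀ a b c : R, (fun x => x * c) '' hadd a b = hadd (a * c) (b * c)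
  mul_zero' : ∀ a : R, a * 0 = 0
  zero_mul' : ∀ a : R, 0 * a = 0

namespace Semihyperring

variable {R : Type*} [Semihyperring R]

/-- Hyperaddition extended to sets: `A + B = ⋃_{a∈A, b∈B} (a + b)`. -/
def hAddSet (A B : Set R) : Set R := ⋃ a ∈ A, ⋃ b ∈ B, hadd a b

/-- The hypersum `x₁ + x₂ + ⋯ + xₙ` of a list of elements (as a set);
the empty hypersum is `{0}`, so `hSum [x] = {x}`. -/
def hSum : List R → Set R
  | [] => {0}
  | x :: xs => hAddSet {x} (hSum xs)

/-- A left hyperideal. -/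
def IsLeftHyperideal (I : Set R) : Prop :=
  I.Nonempty ∧ (∀ a ∈ I, ∀ b ∈ I, hadd a b ⊆ I) ∧ ∀ a ∈ I, ∀ r : R, r * a ∈ I

/-- A right hyperideal. -/
def IsRightHyperideal (I : Set R) : Prop :=
  I.Nonempty ∧ (∀ a ∈ I, ∀ b ∈ I, hadd a b ⊆ I) ∧ ∀ a ∈ I, ∀ r : R, a * r ∈ I

/-- A (two-sided) hyperideal. -/
def IsHyperideal (I : Set R) : Prop :=
  I.Nonempty ∧ (∀ a ∈ I, ∀ b ∈ I, hadd a b ⊆ I) ∧ ∀ a ∈ I, ∀ r : R, r * a ∈ I ∧ a * r ∈ I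

/-- The product `HK`: union of all finite hypersums `a₁·b₁ + ⋯ + aₙ·bₙ` (n ≥ 1)
with `aᵢ ∈ H`, `bᵢ ∈ K`. -/
def hProd (H K : Set R) : Set R :=
  ⋃ (l : List (R × R)) (_ : l ≠ []) (_ : ∀ p ∈ l, p.1 ∈ H ∧ p.2 ∈ K),
    hSum (l.map fun p => p.1 * p.2)

/-- The hyperideal generated by an element. -/
def genHyperideal (a : R) : Set R := ⋂₀ {I : Set R | IsHyperideal I ∧ a ∈ I}

/-- A prime hyperideal. -/
def IsPrimeHyperideal (P : Set R) : Prop :=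
  IsHyperideal P ∧
    ∀ A B : Set R, IsHyperideal A → IsHyperideal B → hProd A B ⊆ P → A ⊆ P ∨ B ⊆ P

/-- A semiprime hyperideal. -/
def IsSemiprimeHyperideal (I : Set R) : Prop :=
  IsHyperideal I ∧ ∀ H : Set R, IsHyperideal H → hProd H H ⊆ I → H ⊆ I

/-- A strongly irreducible hyperideal. -/
def IsStronglyIrreducibleHyperideal (I : Set R) : Prop :=
  IsHyperideal I ∧
    ∀ H K : Set R, IsHyperideal H → IsHyperideal K → H ∩ K ⊆ I → H ⊆ I ∨ K ⊆ I

/-- An irreducible hyperideal. -/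
def IsIrreducibleHyperideal (I : Set R) : Prop :=
  IsHyperideal I ∧
    ∀ H K : Set R, IsHyperideal H → IsHyperideal K → I = H ∩ K → I = H ∨ I = K

/-- `a·R`: the union of all finite hypersums `a·r₁ + ⋯ + a·rₙ` (n ≥ 1) with `rᵢ ∈ R`. -/
def rightMulSet (a : R) : Set R :=
  ⋃ (l : List R) (_ : l ≠ []), hSum (l.map fun r => a * r)

end Semihyperring

open Semihyperring

lemma zero_mem_hyperideal {R : Type*} [Semihyperring R] {I : Set R}
    (hI : IsHyperideal I) : (0 : R) ∈ I := by
  obtain ⟨⟨a, ha⟩, _, hmul⟩ := hI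
  have := (hmul a ha 0).1
  rwa [Semihyperring.zero_mul'] at this

lemma isHyperideal_gen {R : Type*} [Semihyperring R] (a : R) :
    IsHyperideal (genHyperideal a) := by
  refine ⟨⟨0, ?_⟩, ?_, ?_⟩
  · intro J hJ; exact zero_mem_hyperideal hJ.1
  · intro x hx y hy z hz J hJ
    exact hJ.1.2.1 x (hx J hJ) y (hy J hJ) hz
  · intro x hx r
    constructor <;> intro J hJ
    · exact (hJ.1.2.2 x (hx J hJ) r).1
    · exact (hJ.1.2.2 x (hx J hJ) r).2

lemma mem_genHyperideal_self {R : Type*} [Semihyperring R] (a : R) :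
    a ∈ genHyperideal a := fun _ hJ => hJ.2

lemma genHyperideal_subset {R : Type*} [Semihyperring R] {a : R} {I : Set R}
    (hI : IsHyperideal I) (ha : a ∈ I) : genHyperideal a ⊆ I :=
  Set.sInter_subset_of_mem ⟨hI, ha⟩

/-- characterizations of strongly irreducible proper hyperideals. -/
theorem stronglyIrreducible_tfae {R : Type*} [Semihyperring R]
    (I : Set R) (hI : IsHyperideal I) (hproper : I ≠ Set.univ) :
    List.TFAE [
      IsStronglyIrreducibleHyperideal I,
      ∀ a b : R, genHyperideal a ∩ genHyperideal b ⊆ I → a ∈ I ∨ b ∈ I,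
      ∀ a b : R, a ∉ I → b ∉ I →
        (genHyperideal a ∩ genHyperideal b ∩ Iᶜ).Nonempty ] := by
  tfae_have 1 → 2 := by
    intro h a b hsub
    rcases h.2 _ _ (isHyperideal_gen a) (isHyperideal_gen b) hsub with h' | h'
    · exact Or.inl (h' (mem_genHyperideal_self a))
    · exact Or.inr (h' (mem_genHyperideal_self b))
  tfae_have 2 → 3 := by
    intro h a b ha hb
    by_contra hne
    rw [Set.not_nonempty_iff_eq_empty] at hne
    have hsub : genHyperideal a ∩ genHyperideal b ⊆ I := by
      intro x hx
      by_contra hxI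
      exact Set.eq_empty_iff_forall_notMem.mp hne x ⟨hx, hxI⟩
    rcases h a b hsub with h' | h'
    · exact ha h'
    · exact hb h'
  tfae_have 3 → 1 := by
    intro h
    refine ⟨hI, ?_⟩
    intro H K hH hK hsub
    by_contra hne
    push_neg at hne
    obtain ⟨hHn, hKn⟩ := hne
    rw [Set.not_subset] at hHn hKn
    obtain ⟨a, haH, haI⟩ := hHn
    obtain ⟨b, hbK, hbI⟩ := hKn
    obtain ⟨c, ⟨hca, hcb⟩, hcI⟩ := h a b haI hbI
    exact hcI (hsub ⟨genHyperideal_subset hH haH hca,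
      genHyperideal_subset hK hbK hcb⟩)
  tfae_finish
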